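/- Any countable model of PM embeds into any model of DPM. -/

import Mathlib

/-- A pseudotree order: the elements below any given element are linearly ordered. -/
def PseudotreeOrd (T : Type*) [Preorder T] : Prop :=
  ∀ a b c : T, b ≤ a → c ≤ a → b ≤ c ∨ c ≤ b

/-- The Infinite Splitting axiom of the theory DPM. -/
def InfSplitting (T : Type*) [SemilatticeInf T] : Prop :=
  ∀ (g : T) (n : ℕ) (f : Fin n → T), (∀ i, g ≤ f i) →
    (∀ i j : Fin n, i < j → f i ⊓ f j = g) →
    ∃ fn : T, g < fn ∧ ∀ i, f i ⊓ fn = g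

/-- The Density axiom of the theory DPM. -/
def DenseOrd (T : Type*) [Preorder T] : Prop :=
  ∀ g f : T, g < f → ∃ h, g < h ∧ h < f

/-!
Enumerate `T` and build an increasing sequence of finite partial embeddings, defined on finite
`⊓`-closed sets containing `⊥`, whose domains exhaust `T`. To add a point `t` one first adds the
missing points of the `⊓`-closure of `insert t A` in increasing order, so it suffices to add a point
`t ∉ A` with `insert t A` already `⊓`-closed. Let `g` be the largest element of `A` below `t`. If
some element of `A` lies above `t`, send `t` by Density strictly between `π g` and the image of the
least such element. Otherwise apply Infinite Splitting at `π g` to the minimal elements of `π A`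
above `π g`; since `Q` is a pseudotree, the new point then meets every `π a` below `π g`.
-/

open Finset

theorem PseudotreeOrd.exists_isGreatest {T : Type*} [Preorder T] (hT : PseudotreeOrd T)
    {s : Finset T} {t : T} (hs : s.Nonempty) (hst : ∀ a ∈ s, a ≤ t) :
    ∃ g, IsGreatest (s : Set T) g := by
  obtain ⟨g, hg⟩ := s.exists_maximal hs
  refine ⟨g, hg.prop, fun a ha => ?_⟩
  rcases hT t a g (hst a ha) (hst g hg.prop) with h | h
  · exact h
  · exact hg.2 ha h

theorem InfSplitting.exists_of_finset {Q : Type*} [SemilatticeInf Q] (hsplit : InfSplitting Q)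
    {g : Q} (S : Finset Q) (hgS : ∀ s ∈ S, g ≤ s)
    (hS : (S : Set Q).Pairwise fun x y => x ⊓ y = g) :
    ∃ q, g < q ∧ ∀ s ∈ S, s ⊓ q = g := by
  obtain ⟨q, hgq, hq⟩ := hsplit g S.card (fun i => S.equivFin.symm i)
    (fun i => hgS _ (S.equivFin.symm i).2)
    (fun i j hij => hS (S.equivFin.symm i).2 (S.equivFin.symm j).2
      (by simpa [Subtype.ext_iff] using hij.ne))
  exact ⟨q, hgq, fun s hs => by simpa using hq (S.equivFin ⟨s, hs⟩)⟩

/-- Apply Infinite Splitting to the minimal elements of `B` above `p`; in a pseudotree every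
`b ∈ B` above `p` lies above one of them. -/
theorem exists_gt_forall_inf_le {Q : Type*} [SemilatticeInf Q] (hQ : PseudotreeOrd Q)
    (hsplit : InfSplitting Q) {B : Finset Q} (hB : InfClosed (B : Set Q)) (p : Q) :
    ∃ q, p < q ∧ ∀ b ∈ B, b ⊓ q ≤ p := by
  classical
  set P := B.filter (p < ·)
  set M := P.filter (Minimal (· ∈ P))
  have mem_P {x : Q} : x ∈ P ↔ x ∈ B ∧ p < x := mem_filter
  have mem_M {x : Q} : x ∈ M ↔ Minimal (· ∈ P) x := by
    simp only [M, mem_filter, and_iff_right_iff_imp]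
    exact fun h => h.prop
  obtain ⟨q, hpq, hq⟩ := hsplit.exists_of_finset M (fun x hx => (mem_P.1 (mem_M.1 hx).prop).2.le)
    (by
      intro x hx y hy hxy
      have hx := mem_M.1 hx
      have hy := mem_M.1 hy
      by_contra hne
      have hxy_mem : x ⊓ y ∈ P := mem_P.2 ⟨hB (mem_P.1 hx.prop).1 (mem_P.1 hy.prop).1,
        (le_inf (mem_P.1 hx.prop).2.le (mem_P.1 hy.prop).2.le).lt_of_ne (Ne.symm hne)⟩
      exact hxy (le_antisymm ((hx.2 hxy_mem inf_le_left).trans inf_le_right)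
        ((hy.2 hxy_mem inf_le_right).trans inf_le_left)))
  refine ⟨q, hpq, fun b hb => ?_⟩
  rcases hQ q (b ⊓ q) p inf_le_right hpq.le with h | h
  · exact h
  by_contra hbq
  have hlt : p < b ⊓ q := h.lt_of_ne' fun e => hbq e.le
  obtain ⟨m, hmb, hm⟩ := P.exists_le_minimal (mem_P.2 ⟨hb, hlt.trans_le inf_le_left⟩)
  have hmq : m ⊓ q = p := hq m (mem_M.2 hm)
  rcases hQ b m (b ⊓ q) hmb inf_le_left with h' | h'
  · have : m = p := by rwa [inf_eq_left.2 (h'.trans inf_le_right)] at hmq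
    exact (mem_P.1 hm.prop).2.ne' this
  · exact hbq (hmq ▸ le_inf h' inf_le_right)

theorem InfClosed.insert_of_minimal_sdiff {α : Type*} [SemilatticeInf α] {A B : Set α}
    (hA : InfClosed A) (hB : InfClosed B) (hAB : A ⊆ B) {c : α} (hc : Minimal (· ∈ B \ A) c) :
    InfClosed (insert c A) := by
  have key : ∀ a ∈ A, c ⊓ a ∈ insert c A := fun a ha => by
    by_cases h : c ⊓ a ∈ A
    · exact Or.inr h
    · exact Or.inl (le_antisymm inf_le_left (hc.2 ⟨hB hc.prop.1 (hAB ha), h⟩ inf_le_left))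
  rintro x (rfl | hx) y (rfl | hy)
  · simp
  · exact key y hy
  · rw [inf_comm]; exact key x hx
  · exact Or.inr (hA hx hy)

theorem InfClosed.inf_mem_of_not_le {α : Type*} [SemilatticeInf α] {A : Set α} {t a : α}
    (hcl : InfClosed (insert t A)) (ha : a ∈ A) (hta : ¬t ≤ a) : t ⊓ a ∈ A :=
  (hcl (Set.mem_insert t A) (Set.mem_insert_of_mem t ha)).resolve_left
    fun h => hta (h ▸ inf_le_right)

structure PartialEmbedding (T Q : Type*) [SemilatticeInf T] [OrderBot T] [SemilatticeInf Q]
    [OrderBot Q] where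
  dom : Finset T
  toFun : T → Q
  bot_mem : ⊥ ∈ dom
  infClosed : InfClosed (dom : Set T)
  map_bot : toFun ⊥ = ⊥
  map_inf : ∀ ⦃a⦄, a ∈ dom → ∀ ⦃b⦄, b ∈ dom → toFun (a ⊓ b) = toFun a ⊓ toFun b
  injOn : Set.InjOn toFun dom

namespace PartialEmbedding

open scoped Classical

variable {T Q : Type*} [SemilatticeInf T] [OrderBot T] [SemilatticeInf Q] [OrderBot Q]

instance : CoeFun (PartialEmbedding T Q) fun _ => T → Q := ⟨toFun⟩

instance : Preorder (PartialEmbedding T Q) where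
  le f g := f.dom ⊆ g.dom ∧ Set.EqOn g f f.dom
  le_refl _ := ⟨subset_rfl, fun _ _ => rfl⟩
  le_trans _ _ _ hfg hgh := ⟨hfg.1.trans hgh.1, fun a ha => (hgh.2 (hfg.1 ha)).trans (hfg.2 ha)⟩

def bot : PartialEmbedding T Q where
  dom := {⊥}
  toFun _ := ⊥
  bot_mem := mem_singleton_self _
  infClosed := by simp
  map_bot := rfl
  map_inf _ _ _ _ := inf_idem _ |>.symm
  injOn _ ha _ hb _ := by simp_all

theorem monotoneOn (f : PartialEmbedding T Q) : MonotoneOn f f.dom := fun _ ha _ hb hab => by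
  have h := f.map_inf ha hb
  rw [inf_eq_left.2 hab] at h
  exact h ▸ inf_le_right

theorem strictMonoOn (f : PartialEmbedding T Q) : StrictMonoOn f f.dom := fun _ ha _ hb hab =>
  (f.monotoneOn ha hb hab.le).lt_of_ne fun h => hab.ne (f.injOn ha hb h)

theorem infClosed_image (f : PartialEmbedding T Q) : InfClosed (f.dom.image f : Set Q) := by
  rintro _ hx _ hy
  simp only [coe_image, Set.mem_image, mem_coe] at hx hy ⊢
  obtain ⟨a, ha, rfl⟩ := hx
  obtain ⟨b, hb, rfl⟩ := hy
  exact ⟨a ⊓ b, f.infClosed ha hb, f.map_inf ha hb⟩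

/-- `q` is a possible image of a new point `t`: these are exactly the conditions under which
`Function.update f t q` is a partial embedding on `insert t f.dom`. -/
structure Admissible (f : PartialEmbedding T Q) (t : T) (q : Q) : Prop where
  le_of_le : ∀ a ∈ f.dom, t ≤ a → q ≤ f a
  inf_eq : ∀ a ∈ f.dom, ¬t ≤ a → f a ⊓ q = f (t ⊓ a)
  ne : ∀ a ∈ f.dom, f a ≠ q

theorem exists_le_dom_eq_insert {f : PartialEmbedding T Q} {t : T} {q : Q} (ht : t ∉ f.dom)
    (hcl : InfClosed (insert t f.dom : Set T)) (hq : f.Admissible t q) :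
    ∃ f' : PartialEmbedding T Q, f ≤ f' ∧ f'.dom = insert t f.dom := by
  set F := Function.update f t q
  have hF : Set.EqOn F f f.dom := fun _ ha =>
    Function.update_of_ne (ne_of_mem_of_not_mem ha ht) _ _
  have hFt : F t = q := Function.update_self _ _ _
  have hF_inf : ∀ a ∈ f.dom, F (t ⊓ a) = F t ⊓ F a := fun a ha => by
    by_cases hta : t ≤ a
    · rw [inf_eq_left.2 hta, hF ha, hFt, inf_eq_left.2 (hq.le_of_le a ha hta)]
    · rw [hF (hcl.inf_mem_of_not_le ha hta), hF ha, hFt, ← hq.inf_eq a ha hta, inf_comm]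
  refine ⟨⟨insert t f.dom, F, mem_insert_of_mem f.bot_mem, by rwa [coe_insert], ?_, ?_, ?_⟩,
    ⟨subset_insert _ _, hF⟩, rfl⟩
  · rw [hF f.bot_mem, f.map_bot]
  · simp only [mem_insert]
    rintro x (rfl | hx) y (rfl | hy)
    · rw [inf_idem, inf_idem]
    · exact hF_inf y hy
    · rw [inf_comm, hF_inf x hx, inf_comm]
    · rw [hF (f.infClosed hx hy), hF hx, hF hy, f.map_inf hx hy]
  · rw [coe_insert, Set.injOn_insert ht]
    refine ⟨f.injOn.congr hF.symm, ?_⟩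
    rintro ⟨a, ha, h⟩
    exact hq.ne a ha (by rw [← hF ha, h, hFt])

/-- With `g` the predecessor of `t` in `insert t f.dom`, every meet `t ⊓ a` with `¬t ≤ a` equals
`g ⊓ a`, so `f g` takes the place of the missing `f t` in all of them. -/
theorem admissible_of_isGreatest {f : PartialEmbedding T Q} {t g : T} {q : Q}
    (hcl : InfClosed (insert t f.dom : Set T))
    (hg : IsGreatest (f.dom.filter (· ≤ t) : Set T) g) (hgq : f g < q)
    (hlt : ∀ a ∈ f.dom, t ≤ a → q < f a) (hle : ∀ a ∈ f.dom, ¬t ≤ a → f a ⊓ q ≤ f g) :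
    f.Admissible t q := by
  obtain ⟨hgA, hgt⟩ := mem_filter.1 hg.1
  have hfq : ∀ a ∈ f.dom, ¬t ≤ a → f a ⊓ q = f g ⊓ f a := fun a ha hta =>
    le_antisymm (le_inf (hle a ha hta) inf_le_left) (le_inf inf_le_right (inf_le_left.trans hgq.le))
  refine ⟨fun a ha hta => (hlt a ha hta).le, fun a ha hta => ?_, fun a ha h => ?_⟩
  · have hle_g : t ⊓ a ≤ g := hg.2 (mem_filter.2 ⟨hcl.inf_mem_of_not_le ha hta, inf_le_left⟩)
    have : t ⊓ a = g ⊓ a := le_antisymm (le_inf hle_g inf_le_right) (inf_le_inf_right a hgt)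
    rw [hfq a ha hta, this, f.map_inf hgA ha]
  · by_cases hta : t ≤ a
    · exact (hlt a ha hta).ne' h
    · have := hle a ha hta
      rw [h, inf_idem] at this
      exact this.not_gt hgq

theorem exists_admissible (hT : PseudotreeOrd T) (hQ : PseudotreeOrd Q)
    (hsplit : InfSplitting Q) (hdense : DenseOrd Q) (f : PartialEmbedding T Q) {t : T}
    (ht : t ∉ f.dom) (hcl : InfClosed (insert t f.dom : Set T)) : ∃ q, f.Admissible t q := by
  obtain ⟨g, hg⟩ := hT.exists_isGreatest (s := f.dom.filter (· ≤ t))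
    ⟨⊥, mem_filter.2 ⟨f.bot_mem, bot_le⟩⟩ fun a ha => (mem_filter.1 ha).2
  obtain ⟨hgA, hgt⟩ := mem_filter.1 hg.1
  suffices ∃ q, f g < q ∧ (∀ a ∈ f.dom, t ≤ a → q < f a) ∧
      ∀ a ∈ f.dom, ¬t ≤ a → f a ⊓ q ≤ f g by
    obtain ⟨q, hgq, hlt, hle⟩ := this
    exact ⟨q, admissible_of_isGreatest hcl hg hgq hlt hle⟩
  by_cases hne : (f.dom.filter (t ≤ ·)).Nonempty
  · set m := (f.dom.filter (t ≤ ·)).inf' hne id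
    have hmA : m ∈ f.dom :=
      f.infClosed.finsetInf'_mem hne fun a ha => mem_coe.2 (mem_filter.1 ha).1
    have htm : t ≤ m := le_inf' hne id fun a ha => (mem_filter.1 ha).2
    have hgm : g < m := (hgt.lt_of_ne fun h => ht (h ▸ hgA)).trans_le htm
    obtain ⟨q, hgq, hqm⟩ := hdense _ _ (f.strictMonoOn hgA hmA hgm)
    refine ⟨q, hgq, fun a ha hta => hqm.trans_le (f.monotoneOn hmA ha ?_), fun a ha hta => ?_⟩
    · exact inf'_le id (mem_filter.2 ⟨ha, hta⟩)
    have hma : m ⊓ a ≤ t := (hT m (m ⊓ a) t inf_le_left htm).resolve_right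
      fun h => hta (h.trans inf_le_right)
    have hmaA : m ⊓ a ∈ f.dom := f.infClosed hmA ha
    calc f a ⊓ q ≤ f m ⊓ f a := le_inf (inf_le_right.trans hqm.le) inf_le_left
      _ = f (m ⊓ a) := (f.map_inf hmA ha).symm
      _ ≤ f g := f.monotoneOn hmaA hgA (hg.2 (mem_filter.2 ⟨hmaA, hma⟩))
  · obtain ⟨q, hgq, hq⟩ := exists_gt_forall_inf_le hQ hsplit f.infClosed_image (f g)
    exact ⟨q, hgq, fun a ha hta => (hne ⟨a, mem_filter.2 ⟨ha, hta⟩⟩).elim,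
      fun a ha _ => hq _ (mem_image_of_mem _ ha)⟩

theorem exists_le_dom_eq (hT : PseudotreeOrd T) (hQ : PseudotreeOrd Q)
    (hsplit : InfSplitting Q) (hdense : DenseOrd Q) (f : PartialEmbedding T Q) {B : Finset T}
    (hB : InfClosed (B : Set T)) (hfB : f.dom ⊆ B) :
    ∃ f' : PartialEmbedding T Q, f ≤ f' ∧ f'.dom = B := by
  induction h : (B \ f.dom).card generalizing f with
  | zero => exact ⟨f, le_rfl, subset_antisymm hfB (sdiff_eq_empty_iff_subset.1 (card_eq_zero.1 h))⟩
  | succ n ih =>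
    obtain ⟨c, hc⟩ := (B \ f.dom).exists_minimal (card_pos.1 (by omega))
    have hcB : c ∈ B := (mem_sdiff.1 hc.prop).1
    have hcA : c ∉ f.dom := (mem_sdiff.1 hc.prop).2
    have hcl : InfClosed (insert c f.dom : Set T) :=
      f.infClosed.insert_of_minimal_sdiff hB hfB (by simpa [← coe_sdiff] using hc)
    obtain ⟨q, hq⟩ := f.exists_admissible hT hQ hsplit hdense hcA hcl
    obtain ⟨f₁, hff₁, hdom₁⟩ := exists_le_dom_eq_insert hcA hcl hq
    obtain ⟨f', hf₁f', hdom'⟩ := ih f₁ (hdom₁ ▸ insert_subset hcB hfB)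
      (by rw [hdom₁, sdiff_insert, card_erase_of_mem hc.prop, h, Nat.add_sub_cancel])
    exact ⟨f', hff₁.trans hf₁f', hdom'⟩

def definedAt (hT : PseudotreeOrd T) (hQ : PseudotreeOrd Q) (hsplit : InfSplitting Q)
    (hdense : DenseOrd Q) (t : T) : Order.Cofinal (PartialEmbedding T Q) where
  carrier := {f | t ∈ f.dom}
  isCofinal f := by
    have hfin := (f.dom.finite_toSet.insert t).infClosure
    obtain ⟨f', hff', hdom⟩ := f.exists_le_dom_eq hT hQ hsplit hdense (B := hfin.toFinset)
      (by simp [infClosed_infClosure])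
      (fun a ha => by simpa using subset_infClosure (Set.mem_insert_of_mem t ha))
    exact ⟨f', by simpa [hdom] using subset_infClosure (Set.mem_insert t _), hff'⟩

theorem exists_embedding_of_monotone {F : ℕ → PartialEmbedding T Q} (hF : Monotone F)
    (hcover : ∀ t, ∃ n, t ∈ (F n).dom) :
    ∃ π : T → Q, Function.Injective π ∧ π ⊥ = ⊥ ∧ ∀ x y, π (x ⊓ y) = π x ⊓ π y := by
  choose n hn using hcover
  have stable : ∀ t m, n t ≤ m → t ∈ (F m).dom ∧ F m t = F (n t) t :=
    fun t _ h => ⟨(hF h).1 (hn t), (hF h).2 (hn t)⟩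
  refine ⟨fun t => F (n t) t, fun x y hxy => ?_, (F (n ⊥)).map_bot, fun x y => ?_⟩
  · obtain ⟨hx, hx'⟩ := stable x _ (le_max_left (n x) (n y))
    obtain ⟨hy, hy'⟩ := stable y _ (le_max_right (n x) (n y))
    exact (F _).injOn hx hy (hx'.trans (hxy.trans hy'.symm))
  · set N := max (n (x ⊓ y)) (max (n x) (n y))
    obtain ⟨-, hxy'⟩ := stable (x ⊓ y) N (le_max_left _ _)
    obtain ⟨hx, hx'⟩ := stable x N ((le_max_left _ _).trans (le_max_right _ _))
    obtain ⟨hy, hy'⟩ := stable y N ((le_max_right _ _).trans (le_max_right _ _))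
    simp only [← hxy', ← hx', ← hy', (F N).map_inf hx hy]

end PartialEmbedding

/-- any countable model of PM embeds into any model of DPM. -/
theorem stmt10 {T Q : Type*} [SemilatticeInf T] [OrderBot T] [Countable T]
    [SemilatticeInf Q] [OrderBot Q]
    (hT : PseudotreeOrd T) (hQ : PseudotreeOrd Q)
    (hsplit : InfSplitting Q) (hdense : DenseOrd Q) :
    ∃ π : T → Q, Function.Injective π ∧ π ⊥ = ⊥ ∧
      ∀ x y : T, π (x ⊓ y) = π x ⊓ π y := by
  cases nonempty_encodable T
  let D := PartialEmbedding.definedAt hT hQ hsplit hdense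
  exact PartialEmbedding.exists_embedding_of_monotone
    (Order.sequenceOfCofinals.monotone PartialEmbedding.bot D)
    fun t => ⟨_, Order.sequenceOfCofinals.encode_mem PartialEmbedding.bot D t⟩
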